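/- Let f : I ↠ I' be a surjection of finite nonempty sets. Let Tw(I)^f ⊆ Tw(I) be the full subcategory of objects (I → J → K) such that I → K factors through f (i.e., K is a quotient of I'). Then: (a) the full embedding Tw(I)^f ⊆ Tw(I) admits a right adjoint β sending (I → J → K) to (I → J → K'), where K' = inf(I', K) is the common quotient of I corresponding to the join of the equivalence relations determined by I → I' and I → K; (b) the full embedding Tw(I') ⊆ Tw(I)^f, sending (I' → J' → K') to (I → J' → K') via precomposition with f, admits a left adjoint, and hence is cofinal. -/

import Mathlib

open CategoryTheory Function Limits

/-- An object of the category `Tw(I)`: a diagram `I ↠ J ↠ K` of surjections of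
finite nonempty sets. -/
structure TwObj (I : Type) : Type 1 where
  J : Type
  K : Type
  jFin : Finite J
  kFin : Finite K
  jNe : Nonempty J
  kNe : Nonempty K
  p : I → J
  q : J → K
  hp : Function.Surjective p
  hq : Function.Surjective q

/-- A morphism in `Tw(I)` from `(I → J₁ → K₁)` to `(I → J₂ → K₂)`: a surjection
`J₁ → J₂` under `I` together with a surjection `K₂ → K₁` such that the composite
`J₁ → J₂ → K₂ → K₁` equals `J₁ → K₁`. -/
structure TwHom {I : Type} (A B : TwObj I) : Type where
  φ : A.J → B.J
  ψ : B.K → A.K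
  hφ : Function.Surjective φ
  hψ : Function.Surjective ψ
  hp : ∀ i, φ (A.p i) = B.p i
  hq : ∀ j, ψ (B.q (φ j)) = A.q j

theorem TwHom.ext' {I : Type} {A B : TwObj I} :
    ∀ {f g : TwHom A B}, f.φ = g.φ → f.ψ = g.ψ → f = g
  | ⟨_, _, _, _, _, _⟩, ⟨_, _, _, _, _, _⟩, rfl, rfl => rfl

instance twCategory (I : Type) : Category (TwObj I) where
  Hom A B := TwHom A B
  id A := ⟨_root_.id, _root_.id, Function.surjective_id, Function.surjective_id,
    fun _ => rfl, fun _ => rfl⟩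
  comp := fun f g => ⟨g.φ ∘ f.φ, f.ψ ∘ g.ψ, g.hφ.comp f.hφ, f.hψ.comp g.hψ,
    fun i => by simp only [Function.comp_apply, f.hp, g.hp],
    fun j => by simp only [Function.comp_apply, g.hq, f.hq]⟩
  id_comp := fun f => TwHom.ext' rfl rfl
  comp_id := fun f => TwHom.ext' rfl rfl
  assoc := fun f g h => TwHom.ext' rfl rfl

/-- Membership in the full subcategory `Tw(I)^f ⊆ Tw(I)`: the diagram `(I → J → K)` is
such that `I → K` factors through `f : I → I'` (i.e. `K` is a quotient of `I'`). -/
def twQuot {I : Type} (I' : Type) (f : I → I') (A : TwObj I) : Prop :=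
  ∃ g : I' → A.K, ∀ i, g (f i) = A.q (A.p i)

/-- The diagram `(I → J → inf(I', K))`, where `inf(I', K)` is the common quotient of `I`
by the join of the equivalence relations determined by `I → I'` and `I → K`. -/
noncomputable def infObj {I I' : Type} [Finite I] (f : I → I') (A : TwObj I) : TwObj I where
  J := A.J
  K := Quotient (Setoid.ker f ⊔ Setoid.ker (fun i => A.q (A.p i)))
  jFin := A.jFin
  kFin := Finite.of_surjective (Quotient.mk _) fun c => Quotient.exists_rep c
  jNe := A.jNe
  kNe := by
    obtain ⟨j⟩ := A.jNe
    obtain ⟨i, -⟩ := A.hp j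
    exact ⟨Quotient.mk _ i⟩
  p := A.p
  q := fun j => Quotient.mk _ (Function.surjInv A.hp j)
  hp := A.hp
  hq := by
    intro c
    obtain ⟨i, rfl⟩ := Quotient.exists_rep c
    refine ⟨A.p i, Quotient.sound ?_⟩
    have h : A.q (A.p (Function.surjInv A.hp (A.p i))) = A.q (A.p i) :=
      congrArg A.q (Function.surjInv_eq A.hp (A.p i))
    exact Setoid.le_def.mp le_sup_right h

/-- The full embedding `Tw(I') ⊆ Tw(I)` (precomposition with `f`), landing in `Tw(I)^f`. -/
def twRes {I I' : Type} (f : I → I') (hf : Function.Surjective f) : TwObj I' ⥤ TwObj I where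
  obj A := ⟨A.J, A.K, A.jFin, A.kFin, A.jNe, A.kNe, fun i => A.p (f i), A.q,
    A.hp.comp hf, A.hq⟩
  map g := ⟨g.φ, g.ψ, g.hφ, g.hψ, fun i => g.hp (f i), g.hq⟩
  map_id _ := rfl
  map_comp _ _ := rfl

/-- The full embedding `Tw(I') ⊆ Tw(I)^f`. -/
def twResF {I : Type} (I' : Type) (f : I → I') (hf : Function.Surjective f) :
    TwObj I' ⥤ ObjectProperty.FullSubcategory (twQuot I' f) :=
  ObjectProperty.lift _ (twRes f hf) fun A => ⟨fun i' => A.q (A.p i'), fun _ => rfl⟩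

/-!
`Tw(I)` is thin: a morphism is determined by `φ`, because `φ ∘ p = p'` with `p` surjective,
and then `ψ` is determined because `ψ ∘ q' ∘ φ = q` with `q' ∘ φ` surjective. So an adjunction
between full subcategories of `Tw(I)` and `Tw(I')` only needs the unit and counit maps.

(a) The counit `(I → J → inf(I', K)) ⟶ (I → J → K)` is the identity on `J` and the quotient map
`K ↠ inf(I', K)`; when `K` is already a quotient of `I'`, the relation `ker f` is contained in
`ker (I → K)`, so `inf(I', K) → K` is well defined and gives the unit.

(b) The left adjoint sends `(I → J → K)` to `(I' → I' ⊔_I J → K)`, where `K` receives the pushout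
because `I → K` factors through both `f` and `I → J`. A functor with a left adjoint is final.
-/

namespace Setoid

variable {α β : Type*}

theorem ker_le_ker_comp {γ : Type*} (u : α → β) (g : β → γ) : ker u ≤ ker (g ∘ u) :=
  fun _ _ h => congrArg g h

theorem map_of_le_surjective {s t : Setoid α} (h : s ≤ t) : Surjective (map_of_le h) :=
  fun c => Quotient.inductionOn c fun a => ⟨Quotient.mk _ a, rfl⟩

/-- For `g` surjective and `ker g ≤ r`, the factorisation of `Quotient.mk r` through `g`. -/
noncomputable def factorMk {g : α → β} (hg : Surjective g) (r : Setoid α) : β → Quotient r :=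
  fun b => Quotient.mk r (surjInv hg b)

variable {g : α → β} (hg : Surjective g) {r : Setoid α}

theorem factorMk_apply (hr : ker g ≤ r) (a : α) : factorMk hg r (g a) = Quotient.mk r a :=
  Quotient.sound (hr (surjInv_eq hg (g a)))

theorem factorMk_surjective (hr : ker g ≤ r) : Surjective (factorMk hg r) :=
  fun c => Quotient.inductionOn c fun a => ⟨g a, factorMk_apply hg hr a⟩

end Setoid

open Setoid

section Thin

variable {C D : Type*} [Category C] [Category D]

instance ObjectProperty.FullSubcategory.isThin [Quiver.IsThin C] (P : ObjectProperty C) :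
    Quiver.IsThin P.FullSubcategory :=
  fun _ _ => ⟨fun _ _ => InducedCategory.hom_ext (Subsingleton.elim _ _)⟩

def Adjunction.ofThin [Quiver.IsThin C] [Quiver.IsThin D] {F : C ⥤ D} {G : D ⥤ C}
    (unit : ∀ X, X ⟶ G.obj (F.obj X)) (counit : ∀ Y, F.obj (G.obj Y) ⟶ Y) : F ⊣ G :=
  Adjunction.mkOfUnitCounit
    { unit := { app := unit, naturality := fun _ _ _ => Subsingleton.elim _ _ }
      counit := { app := counit, naturality := fun _ _ _ => Subsingleton.elim _ _ }
      left_triangle := NatTrans.ext (funext fun _ => Subsingleton.elim _ _)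
      right_triangle := NatTrans.ext (funext fun _ => Subsingleton.elim _ _) }

end Thin

namespace TwHom

variable {I : Type} {A B : TwObj I}

theorem ψ_q_p (h : TwHom A B) (i : I) : h.ψ (B.q (B.p i)) = A.q (A.p i) := by
  rw [← h.hp i, h.hq]

theorem ker_p_le (h : TwHom A B) : ker A.p ≤ ker B.p := fun a b (hab : A.p a = A.p b) =>
  show B.p a = B.p b by rw [← h.hp a, ← h.hp b, hab]

theorem ker_q_p_le (h : TwHom A B) :
    ker (fun i => B.q (B.p i)) ≤ ker (fun i => A.q (A.p i)) :=
  fun a b (hab : B.q (B.p a) = B.q (B.p b)) =>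
    show A.q (A.p a) = A.q (A.p b) by rw [← h.ψ_q_p a, ← h.ψ_q_p b, hab]

instance : Quiver.IsThin (TwObj I) := fun A B => by
  refine ⟨fun h h' => ?_⟩
  have hφ : h.φ = h'.φ := funext fun j => by
    obtain ⟨i, rfl⟩ := A.hp j
    rw [h.hp, h'.hp]
  refine TwHom.ext' hφ (funext fun k => ?_)
  obtain ⟨j, rfl⟩ := (B.hq.comp h.hφ) k
  simp only [comp_apply, h.hq]
  rw [hφ, h'.hq]

end TwHom

section Adjoints

variable {I I' : Type} (f : I → I') (hf : Surjective f)

theorem twQuot.ker_le {A : TwObj I} (hA : twQuot I' f A) :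
    ker f ≤ ker (fun i => A.q (A.p i)) := fun a b (hab : f a = f b) => by
  obtain ⟨g, hg⟩ := hA
  show A.q (A.p a) = A.q (A.p b)
  rw [← hg a, ← hg b, hab]

section InfObj

variable [Finite I]

theorem infObj_q_p (A : TwObj I) (i : I) :
    (infObj f A).q (A.p i) = Quotient.mk _ i :=
  factorMk_apply A.hp (le_trans (ker_le_ker_comp A.p A.q) le_sup_right) i

theorem twQuot_infObj (hf : Surjective f) (A : TwObj I) : twQuot I' f (infObj f A) :=
  ⟨factorMk hf _, fun i => (factorMk_apply hf le_sup_left i).trans (infObj_q_p f A i).symm⟩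

noncomputable def infObjMap {A B : TwObj I} (h : A ⟶ B) : infObj f A ⟶ infObj f B where
  φ := h.φ
  ψ := map_of_le (sup_le_sup_left h.ker_q_p_le _)
  hφ := h.hφ
  hψ := map_of_le_surjective _
  hp := h.hp
  hq j := by
    obtain ⟨i, rfl⟩ := A.hp j
    rw [h.hp, infObj_q_p, infObj_q_p]
    rfl

noncomputable def infObjCounit (A : TwObj I) : infObj f A ⟶ A where
  φ := id
  ψ := factorMk (A.hq.comp A.hp) _
  hφ := surjective_id
  hψ := factorMk_surjective _ le_sup_right
  hp _ := rfl
  hq j := by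
    obtain ⟨i, rfl⟩ := A.hp j
    exact (factorMk_apply _ le_sup_right i).trans (infObj_q_p f A i).symm

noncomputable def infObjUnit (A : TwObj I) (hA : twQuot I' f A) : A ⟶ infObj f A where
  φ := id
  ψ := Quotient.lift (fun i => A.q (A.p i)) fun _ _ hab => sup_le hA.ker_le le_rfl hab
  hφ := surjective_id
  hψ := Quotient.lift_surjective _ _ (A.hq.comp A.hp)
  hp _ := rfl
  hq j := by
    obtain ⟨i, rfl⟩ := A.hp j
    simp only [id, infObj_q_p]
    rfl

noncomputable def twInf : TwObj I ⥤ ObjectProperty.FullSubcategory (twQuot I' f) where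
  obj A := ⟨infObj f A, twQuot_infObj f hf A⟩
  map h := ObjectProperty.homMk (infObjMap f h)
  map_id _ := Subsingleton.elim _ _
  map_comp _ _ := Subsingleton.elim _ _

noncomputable def twInfAdjunction : ObjectProperty.ι (twQuot I' f) ⊣ twInf f hf :=
  Adjunction.ofThin (fun X => ObjectProperty.homMk (infObjUnit f X.obj X.property))
    (fun A => infObjCounit f A)

end InfObj

section PushoutObj

/-- `I' → I' ⊔_I J → K`: the quotient of `I` by `ker f ⊔ ker p` is the pushout of `f` and `p`. -/
noncomputable def pushoutObj (X : ObjectProperty.FullSubcategory (twQuot I' f)) : TwObj I' where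
  J := Quotient (ker f ⊔ ker X.obj.p)
  K := X.obj.K
  jFin := have := X.obj.jFin; .of_surjective _ (factorMk_surjective X.obj.hp le_sup_right)
  kFin := X.obj.kFin
  jNe := X.obj.jNe.map (factorMk X.obj.hp _)
  kNe := X.obj.kNe
  p := factorMk hf _
  q := Quotient.lift (fun i => X.obj.q (X.obj.p i)) fun _ _ hab =>
    sup_le X.property.ker_le (ker_le_ker_comp X.obj.p X.obj.q) hab
  hp := factorMk_surjective hf le_sup_left
  hq := Quotient.lift_surjective _ _ (X.obj.hq.comp X.obj.hp)

noncomputable def pushoutMap {X Y : ObjectProperty.FullSubcategory (twQuot I' f)} (u : X ⟶ Y) :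
    pushoutObj f hf X ⟶ pushoutObj f hf Y where
  φ := map_of_le (sup_le_sup_left u.hom.ker_p_le _)
  ψ := u.hom.ψ
  hφ := map_of_le_surjective _
  hψ := u.hom.hψ
  hp i' := by
    obtain ⟨i, rfl⟩ := hf i'
    simp only [pushoutObj, factorMk_apply hf le_sup_left]
    rfl
  hq c := Quotient.inductionOn c u.hom.ψ_q_p

noncomputable def pushoutUnit (X : ObjectProperty.FullSubcategory (twQuot I' f)) :
    X.obj ⟶ (twRes f hf).obj (pushoutObj f hf X) where
  φ := factorMk X.obj.hp _
  ψ := id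
  hφ := factorMk_surjective _ le_sup_right
  hψ := surjective_id
  hp i := (factorMk_apply _ le_sup_right i).trans (factorMk_apply hf le_sup_left i).symm
  hq j := by
    obtain ⟨i, rfl⟩ := X.obj.hp j
    simp only [pushoutObj, factorMk_apply _ le_sup_right]
    rfl

noncomputable def pushoutCounit (Y : TwObj I') :
    pushoutObj f hf ((twResF I' f hf).obj Y) ⟶ Y where
  φ := Quotient.lift (fun i => Y.p (f i)) fun _ _ hab =>
    sup_le (ker_le_ker_comp f Y.p) le_rfl hab
  ψ := id
  hφ := Quotient.lift_surjective _ _ (Y.hp.comp hf)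
  hψ := surjective_id
  hp i' := by
    obtain ⟨i, rfl⟩ := hf i'
    simp only [pushoutObj, factorMk_apply hf le_sup_left]
    rfl
  hq c := Quotient.inductionOn c fun _ => rfl

noncomputable def twPushout : ObjectProperty.FullSubcategory (twQuot I' f) ⥤ TwObj I' where
  obj := pushoutObj f hf
  map := pushoutMap f hf
  map_id _ := Subsingleton.elim _ _
  map_comp _ _ := Subsingleton.elim _ _

noncomputable def twPushoutAdjunction : twPushout f hf ⊣ twResF I' f hf :=
  Adjunction.ofThin (fun X => ObjectProperty.homMk (pushoutUnit f hf X)) (pushoutCounit f hf)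

end PushoutObj

end Adjoints

theorem stmt6 (I I' : Type) [Finite I]
    (f : I → I') (hf : Function.Surjective f) :
    (∃ β : TwObj I ⥤ ObjectProperty.FullSubcategory (twQuot I' f),
        Nonempty (ObjectProperty.ι (twQuot I' f) ⊣ β) ∧
        ∀ A : TwObj I, (β.obj A).obj = infObj f A) ∧
    ((∃ L : ObjectProperty.FullSubcategory (twQuot I' f) ⥤ TwObj I',
        Nonempty (L ⊣ twResF I' f hf)) ∧ (twResF I' f hf).Final) :=
  ⟨⟨twInf f hf, ⟨twInfAdjunction f hf⟩, fun _ => rfl⟩,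
    ⟨twPushout f hf, ⟨twPushoutAdjunction f hf⟩⟩,
      Functor.final_of_adjunction (twPushoutAdjunction f hf)⟩
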